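/- Let h ∈ ℂ^n, v ∈ ℂ^m with unit-modulus entries, Z ∈ ℂ^{m×n}, w ∈ ℂ^n nonzero, ε_d, ε_c > 0, and suppose |(h^H + v^H Z)w| < (ε_d + √m ε_c)‖w‖₂. Define ĥ = h + Z^H v (so (h^H + v^H Z)w = ĥ^H w), Δh = −(ε_d/(ε_d + √m ε_c)) · (w w^H ĥ)/‖w‖₂², and ΔZ = −(ε_c/(√m ε_d + m ε_c)) · (v ĥ^H w w^H)/‖w‖₂². Then ‖Δh‖₂ ≤ ε_d, ‖ΔZ‖_F ≤ ε_c, and ((h + Δh)^H + v^H(Z + ΔZ)) w = 0. -/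

import Mathlib

noncomputable def vnorm {n : ℕ} (x : Fin n → ℂ) : ℝ :=
  Real.sqrt (∑ i, ‖x i‖ ^ 2)

noncomputable def fnorm {m n : ℕ} (Z : Fin m → Fin n → ℂ) : ℝ :=
  Real.sqrt (∑ i, ∑ j, ‖Z i j‖ ^ 2)

noncomputable def dotH {n : ℕ} (a w : Fin n → ℂ) : ℂ :=
  ∑ i, (starRingEnd ℂ) (a i) * w i

noncomputable def quadH {m n : ℕ} (v : Fin m → ℂ) (Z : Fin m → Fin n → ℂ)
    (w : Fin n → ℂ) : ℂ :=
  ∑ i, ∑ j, (starRingEnd ℂ) (v i) * Z i j * w j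

/-! Write `s = ĥᴴ w`. The perturbation `Δh` is a multiple of `w` and `ΔZ` a multiple of `v wᴴ`;
they change `ĥᴴ w` by `-c₁ s` and `-m c₂ s` respectively, where the weights
`c₁ = εd / (εd + √m εc)` and `c₂ = εc / (√m εd + m εc)` satisfy `c₁ + m c₂ = 1`, so the product
vanishes. Their sizes are `c₁ |s| / ‖w‖` and `√m c₂ |s| / ‖w‖`, and `|s| < (εd + √m εc) ‖w‖`
bounds them by `εd` and `εc`. -/

open Finset ComplexConjugate

section

variable {m n : ℕ}

lemma vnorm_sq (x : Fin n → ℂ) : vnorm x ^ 2 = ∑ i, ‖x i‖ ^ 2 :=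
  Real.sq_sqrt (by positivity)

lemma vnorm_pos {x : Fin n → ℂ} (hx : x ≠ 0) : 0 < vnorm x := by
  obtain ⟨i, hi⟩ := Function.ne_iff.mp hx
  exact Real.sqrt_pos.mpr <|
    sum_pos' (fun _ _ => by positivity) ⟨i, mem_univ i, pow_pos (norm_pos_iff.mpr hi) 2⟩

lemma vnorm_const_mul (c : ℂ) (x : Fin n → ℂ) : vnorm (fun i => c * x i) = ‖c‖ * vnorm x := by
  simp only [vnorm, norm_mul, mul_pow, ← mul_sum]
  rw [Real.sqrt_mul (by positivity), Real.sqrt_sq (norm_nonneg c)]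

lemma vnorm_conj (x : Fin n → ℂ) : vnorm (fun i => conj (x i)) = vnorm x := by
  simp [vnorm]

lemma vnorm_eq_sqrt_card {v : Fin m → ℂ} (hv : ∀ i, ‖v i‖ = 1) : vnorm v = √m := by
  simp [vnorm, hv]

lemma fnorm_mul_mul (a : Fin m → ℂ) (b : Fin n → ℂ) :
    fnorm (fun i j => a i * b j) = vnorm a * vnorm b := by
  simp only [fnorm, vnorm, norm_mul, mul_pow, ← sum_mul_sum]
  exact Real.sqrt_mul (by positivity) _

lemma conj_dotH (a w : Fin n → ℂ) : conj (dotH a w) = dotH w a := by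
  simp [dotH, mul_comm]

lemma dotH_self (w : Fin n → ℂ) : dotH w w = (vnorm w : ℂ) ^ 2 := by
  simp only [dotH, ← Complex.ofReal_pow, vnorm_sq, Complex.ofReal_sum, Complex.sq_norm]
  exact sum_congr rfl fun i _ => by rw [mul_comm, Complex.mul_conj]

lemma dotH_add_left (a b w : Fin n → ℂ) : dotH (a + b) w = dotH a w + dotH b w := by
  simp only [dotH, Pi.add_apply, map_add, add_mul, sum_add_distrib]

lemma dotH_const_mul_left (c : ℂ) (a w : Fin n → ℂ) :
    dotH (fun j => c * a j) w = conj c * dotH a w := by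
  simp only [dotH, map_mul, mul_sum, mul_assoc]

lemma dotH_const_mul_right (c : ℂ) (a w : Fin n → ℂ) :
    dotH a (fun j => c * w j) = c * dotH a w := by
  simp only [dotH, mul_sum]
  exact sum_congr rfl fun j _ => by ring

lemma quadH_add (v : Fin m → ℂ) (Z Z' : Fin m → Fin n → ℂ) (w : Fin n → ℂ) :
    quadH v (fun i j => Z i j + Z' i j) w = quadH v Z w + quadH v Z' w := by
  simp only [quadH, mul_add, add_mul, sum_add_distrib]

lemma quadH_mul_conj (v a : Fin m → ℂ) (b w : Fin n → ℂ) :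
    quadH v (fun i j => a i * conj (b j)) w = dotH v a * dotH b w := by
  simp only [quadH, dotH, sum_mul_sum, mul_assoc]

lemma dotH_add_quadH (h : Fin n → ℂ) (v : Fin m → ℂ) (Z : Fin m → Fin n → ℂ) (w : Fin n → ℂ) :
    dotH h w + quadH v Z w = dotH (fun j => h j + ∑ i, conj (Z i j) * v i) w := by
  simp only [dotH, quadH, map_add, map_sum, map_mul, Complex.conj_conj, add_mul, sum_mul,
    sum_add_distrib]
  rw [sum_comm]
  congr 1
  exact sum_congr rfl fun j _ => sum_congr rfl fun i _ => by ring

end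

lemma norm_neg_ofReal_mul_div_sq_mul_le {c D W : ℝ} {z : ℂ} (hc : 0 ≤ c) (hW : 0 < W)
    (hz : ‖z‖ ≤ D * W) : ‖-(c : ℂ) * z / (W : ℂ) ^ 2‖ * W ≤ c * D := by
  have hzW : ‖z‖ / W ≤ D := (div_le_iff₀ hW).mpr hz
  calc ‖-(c : ℂ) * z / (W : ℂ) ^ 2‖ * W = c * (‖z‖ / W) := by
        simp only [norm_div, norm_mul, norm_neg, Complex.norm_real, Real.norm_of_nonneg hc,
          Real.norm_of_nonneg hW.le, norm_pow]
        field_simp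
    _ ≤ c * D := by gcongr

section

variable {t εd εc : ℝ}

lemma sqrt_weights_sum_eq_one (hεd : 0 < εd) (hεc : 0 < εc) (ht : 0 ≤ t) :
    εd / (εd + t * εc) + t ^ 2 * (εc / (t * εd + t ^ 2 * εc)) = 1 := by
  rcases ht.eq_or_lt with rfl | ht
  · simp [hεd.ne']
  · have : 0 < εd + t * εc := by positivity
    rw [show t * εd + t ^ 2 * εc = t * (εd + t * εc) by ring]
    field_simp

lemma sqrt_weight_mul_le (hεd : 0 < εd) (hεc : 0 < εc) (ht : 0 ≤ t) :
    t * (εc / (t * εd + t ^ 2 * εc) * (εd + t * εc)) ≤ εc := by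
  rcases ht.eq_or_lt with rfl | ht
  · simp [hεc.le]
  · apply le_of_eq
    have : 0 < εd + t * εc := by positivity
    rw [show t * εd + t ^ 2 * εc = t * (εd + t * εc) by ring]
    field_simp

end

theorem stmt13_general {m n : ℕ} (h : Fin n → ℂ)
    (v : Fin m → ℂ) (hv : ∀ i, ‖v i‖ = 1)
    (Z : Fin m → Fin n → ℂ) (w : Fin n → ℂ) (hw : w ≠ 0)
    (εd εc : ℝ) (hεd : 0 < εd) (hεc : 0 < εc)
    (hsmall : ‖dotH h w + quadH v Z w‖
        < (εd + Real.sqrt m * εc) * vnorm w)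
    (hhat : Fin n → ℂ)
    (hhat_def : hhat = fun j => h j + ∑ i, (starRingEnd ℂ) (Z i j) * v i)
    (Δh : Fin n → ℂ)
    (hΔh : Δh = fun j =>
      -((εd / (εd + Real.sqrt m * εc)) : ℂ) * (w j * dotH w hhat)
        / ((vnorm w : ℂ) ^ 2))
    (ΔZ : Fin m → Fin n → ℂ)
    (hΔZ : ΔZ = fun i j =>
      -((εc / (Real.sqrt m * εd + m * εc)) : ℂ)
        * (v i * dotH hhat w * (starRingEnd ℂ) (w j)) / ((vnorm w : ℂ) ^ 2)) :
    vnorm Δh ≤ εd ∧ fnorm ΔZ ≤ εc ∧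
    dotH (h + Δh) w + quadH v (fun i j => Z i j + ΔZ i j) w = 0 := by
  have hsum : dotH h w + quadH v Z w = dotH hhat w := by rw [dotH_add_quadH, hhat_def]
  set W := vnorm w with hW_def
  set s := dotH hhat w
  rw [hsum] at hsmall
  have hW : 0 < W := vnorm_pos hw
  have ht : 0 ≤ √(m : ℝ) := Real.sqrt_nonneg _
  set c₁ : ℝ := εd / (εd + √m * εc)
  set c₂ : ℝ := εc / (√m * εd + √m ^ 2 * εc)
  have hm_cast : (m : ℂ) = ((√m ^ 2 : ℝ) : ℂ) := by
    rw [Real.sq_sqrt (Nat.cast_nonneg _)]; norm_cast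
  have hΔh' : Δh = fun j => (-(c₁ : ℂ) * conj s / (W : ℂ) ^ 2) * w j := by
    rw [hΔh, ← conj_dotH]; funext j; push_cast [c₁]; ring
  have hΔZ' : ΔZ = fun i j => (-(c₂ : ℂ) * s / (W : ℂ) ^ 2 * v i) * conj (w j) := by
    rw [hΔZ, hm_cast]; funext i j; push_cast [c₂]; ring
  refine ⟨?_, ?_, ?_⟩
  · rw [hΔh', vnorm_const_mul]
    calc _ ≤ c₁ * (εd + √m * εc) :=
          norm_neg_ofReal_mul_div_sq_mul_le (by positivity) hW (by simpa using hsmall.le)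
      _ = εd := div_mul_cancel₀ _ (by positivity)
  · rw [hΔZ', fnorm_mul_mul, vnorm_const_mul, vnorm_conj, vnorm_eq_sqrt_card hv]
    calc _ = √m * (‖-(c₂ : ℂ) * s / (W : ℂ) ^ 2‖ * W) := by ring
      _ ≤ √m * (c₂ * (εd + √m * εc)) := mul_le_mul_of_nonneg_left
          (norm_neg_ofReal_mul_div_sq_mul_le (by positivity) hW hsmall.le) ht
      _ ≤ εc := sqrt_weight_mul_le hεd hεc ht
  · rw [dotH_add_left, quadH_add, hΔh', hΔZ', dotH_const_mul_left, quadH_mul_conj,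
      dotH_const_mul_right, dotH_self, dotH_self, vnorm_eq_sqrt_card hv]
    have hc : (c₁ : ℂ) + (√m : ℂ) ^ 2 * c₂ = 1 := by
      exact_mod_cast sqrt_weights_sum_eq_one hεd hεc ht
    have hW0 : (W : ℂ) ≠ 0 := by exact_mod_cast hW.ne'
    simp only [map_div₀, map_mul, map_neg, map_pow, Complex.conj_ofReal, Complex.conj_conj,
      ← hW_def]
    field_simp
    linear_combination hsum - s * hc

/-- Second case of Lemma 1: when the nominal signal magnitude is smaller than
the uncertainty radius, the explicit feasible perturbations drive the
effective channel–precoder product exactly to zero. -/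
theorem stmt13 {m n : ℕ} (hm : 0 < m) (h : Fin n → ℂ)
    (v : Fin m → ℂ) (hv : ∀ i, ‖v i‖ = 1)
    (Z : Fin m → Fin n → ℂ) (w : Fin n → ℂ) (hw : w ≠ 0)
    (εd εc : ℝ) (hεd : 0 < εd) (hεc : 0 < εc)
    (hsmall : ‖dotH h w + quadH v Z w‖
        < (εd + Real.sqrt m * εc) * vnorm w)
    (hhat : Fin n → ℂ)
    (hhat_def : hhat = fun j => h j + ∑ i, (starRingEnd ℂ) (Z i j) * v i)
    (Δh : Fin n → ℂ)
    (hΔh : Δh = fun j =>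
      -((εd / (εd + Real.sqrt m * εc)) : ℂ) * (w j * dotH w hhat)
        / ((vnorm w : ℂ) ^ 2))
    (ΔZ : Fin m → Fin n → ℂ)
    (hΔZ : ΔZ = fun i j =>
      -((εc / (Real.sqrt m * εd + m * εc)) : ℂ)
        * (v i * dotH hhat w * (starRingEnd ℂ) (w j)) / ((vnorm w : ℂ) ^ 2)) :
    vnorm Δh ≤ εd ∧ fnorm ΔZ ≤ εc ∧
    dotH (h + Δh) w + quadH v (fun i j => Z i j + ΔZ i j) w = 0 :=
  stmt13_general h v hv Z w hw εd εc hεd hεc hsmall hhat hhat_def Δh hΔh ΔZ hΔZ
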